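/- Let Q, X, Y be IPC formulas, let α = Q(X ⊃ Y) = (X ⊃ Y) ⊃ Q, α_0 = QQX = (X ⊃ Q) ⊃ Q, α_1 = QY = Y ⊃ Q, and let θ = (Z_N, …, Z_0) be a finite nonempty sequence of IPC formulas having α among its terms. If α_0 ⊃ C(θ) is a theorem of IPC, or α_1 ⊃ C(θ) is a theorem of IPC, then C(θ) = Z_N ⊃ (⋯(Z_0 ⊃ Q)⋯) is a theorem of IPC. -/
import Mathlib


/-- Formulas of the Implicational Propositional Calculus: propositional
variables and implication. -/
inductive IPCFormula : Type where
  | var : ℕ → IPCFormula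
  | imp : IPCFormula → IPCFormula → IPCFormula

infixr:60 " ⊃' " => IPCFormula.imp

/-- Derivability from a set of hypotheses Γ in the Hilbert system with
axiom schemes IPC1, IPC2, Peirce and the rule modus ponens. -/
inductive IPCDeriv : Set IPCFormula → IPCFormula → Prop where
  | hyp {Γ : Set IPCFormula} {X : IPCFormula} : X ∈ Γ → IPCDeriv Γ X
  | ipc1 {Γ : Set IPCFormula} (X Y : IPCFormula) :
      IPCDeriv Γ (X ⊃' (Y ⊃' X))
  | ipc2 {Γ : Set IPCFormula} (X Y Z : IPCFormula) :
      IPCDeriv Γ ((X ⊃' (Y ⊃' Z)) ⊃' ((X ⊃' Y) ⊃' (X ⊃' Z)))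
  | peirce {Γ : Set IPCFormula} (X Y : IPCFormula) :
      IPCDeriv Γ (((X ⊃' Y) ⊃' X) ⊃' X)
  | mp {Γ : Set IPCFormula} {X Y : IPCFormula} :
      IPCDeriv Γ (X ⊃' Y) → IPCDeriv Γ X → IPCDeriv Γ Y

/-- A theorem of IPC: derivable from no hypotheses. -/
def IPCThm (X : IPCFormula) : Prop := IPCDeriv ∅ X

/-- Disjunction defined within IPC: X ∨ Y := (X ⊃ Y) ⊃ Y. -/
def IPCFormula.disj (X Y : IPCFormula) : IPCFormula := (X ⊃' Y) ⊃' Y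

/-- For a sequence (Z_N, …, Z_0) of IPC formulas (given as Z : ℕ → IPCFormula),
C(Z_N, …, Z_0) := Z_N ⊃ (Z_{N−1} ⊃ (⋯(Z_0 ⊃ Q)⋯)). -/
def IPCC (Q : IPCFormula) (Z : ℕ → IPCFormula) : ℕ → IPCFormula
  | 0 => Z 0 ⊃' Q
  | n + 1 => Z (n + 1) ⊃' IPCC Q Z n

namespace IPCAux

lemma weaken {Γ Δ : Set IPCFormula} {A : IPCFormula}
    (h : IPCDeriv Γ A) (hs : Γ ⊆ Δ) : IPCDeriv Δ A := by
  induction h with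
  | hyp hm => exact IPCDeriv.hyp (hs hm)
  | ipc1 A B => exact IPCDeriv.ipc1 A B
  | ipc2 A B C => exact IPCDeriv.ipc2 A B C
  | peirce A B => exact IPCDeriv.peirce A B
  | mp _ _ ih1 ih2 => exact IPCDeriv.mp ih1 ih2

lemma identity (Γ : Set IPCFormula) (A : IPCFormula) : IPCDeriv Γ (A ⊃' A) :=
  IPCDeriv.mp (IPCDeriv.mp (IPCDeriv.ipc2 A (A ⊃' A) A) (IPCDeriv.ipc1 A (A ⊃' A)))
    (IPCDeriv.ipc1 A A)

lemma deduction_aux {Δ : Set IPCFormula} {B : IPCFormula} (h : IPCDeriv Δ B) :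
    ∀ {Γ : Set IPCFormula} {A : IPCFormula}, Δ = insert A Γ → IPCDeriv Γ (A ⊃' B) := by
  induction h with
  | hyp hm =>
      intro Γ A hEq
      subst hEq
      rcases hm with rfl | hm
      · exact identity Γ _
      · exact IPCDeriv.mp (IPCDeriv.ipc1 _ _) (IPCDeriv.hyp hm)
  | ipc1 X Y => intro Γ A _; exact IPCDeriv.mp (IPCDeriv.ipc1 _ A) (IPCDeriv.ipc1 X Y)
  | ipc2 X Y W => intro Γ A _; exact IPCDeriv.mp (IPCDeriv.ipc1 _ A) (IPCDeriv.ipc2 X Y W)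
  | peirce X Y => intro Γ A _; exact IPCDeriv.mp (IPCDeriv.ipc1 _ A) (IPCDeriv.peirce X Y)
  | mp _ _ ih1 ih2 =>
      intro Γ A hEq
      exact IPCDeriv.mp (IPCDeriv.mp (IPCDeriv.ipc2 _ _ _) (ih1 hEq)) (ih2 hEq)

lemma deduction {Γ : Set IPCFormula} {A B : IPCFormula}
    (h : IPCDeriv (insert A Γ) B) : IPCDeriv Γ (A ⊃' B) :=
  deduction_aux h rfl

/-- The hypothesis set {Z 0, …, Z n}. -/
def hyps (Z : ℕ → IPCFormula) (n : ℕ) : Set IPCFormula :=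
  {F | ∃ j ≤ n, F = Z j}

lemma mem_hyps {Z : ℕ → IPCFormula} {n j : ℕ} (hj : j ≤ n) : Z j ∈ hyps Z n :=
  ⟨j, hj, rfl⟩

lemma hyps_succ (Z : ℕ → IPCFormula) (n : ℕ) :
    hyps Z (n + 1) = insert (Z 0) (hyps (fun j => Z (j + 1)) n) := by
  ext F
  constructor
  · rintro ⟨j, hj, rfl⟩
    cases j with
    | zero => exact Or.inl rfl
    | succ k => exact Or.inr ⟨k, by omega, rfl⟩
  · rintro (rfl | ⟨k, hk, rfl⟩)
    · exact ⟨0, by omega, rfl⟩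
    · exact ⟨k + 1, by omega, rfl⟩

lemma hyps_zero (Z : ℕ → IPCFormula) : hyps Z 0 = insert (Z 0) ∅ := by
  ext F
  constructor
  · rintro ⟨j, hj, rfl⟩; interval_cases j; exact Or.inl rfl
  · rintro (rfl | hF)
    · exact ⟨0, le_refl 0, rfl⟩
    · exact absurd hF (Set.notMem_empty F)

lemma IPCC_shift (Q : IPCFormula) (Z : ℕ → IPCFormula) (n : ℕ) :
    IPCC (Z 0 ⊃' Q) (fun j => Z (j + 1)) n = IPCC Q Z (n + 1) := by
  induction n with
  | zero => rfl
  | succ k ih => simp [IPCC, ih]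

lemma deriv_to_thm (Q : IPCFormula) (Z : ℕ → IPCFormula) (n : ℕ)
    (h : IPCDeriv (hyps Z n) Q) : IPCThm (IPCC Q Z n) := by
  induction n generalizing Q Z with
  | zero =>
      rw [hyps_zero] at h
      exact deduction h
  | succ k ih =>
      rw [hyps_succ] at h
      have := ih (Z 0 ⊃' Q) (fun j => Z (j + 1)) (deduction h)
      rwa [IPCC_shift] at this

lemma thm_unfold_aux (Q : IPCFormula) (Z : ℕ → IPCFormula) (n : ℕ) :
    ∀ m ≤ n, IPCDeriv (hyps Z n) (IPCC Q Z m) → IPCDeriv (hyps Z n) Q := by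
  intro m
  induction m with
  | zero => intro hm h; exact IPCDeriv.mp h (IPCDeriv.hyp (mem_hyps (by omega)))
  | succ k ih =>
      intro hm h
      exact ih (by omega) (IPCDeriv.mp h (IPCDeriv.hyp (mem_hyps (by omega))))

lemma thm_unfold (Q : IPCFormula) (Z : ℕ → IPCFormula) (n : ℕ)
    (h : IPCDeriv (hyps Z n) (IPCC Q Z n)) : IPCDeriv (hyps Z n) Q :=
  thm_unfold_aux Q Z n n le_rfl h

end IPCAux

theorem stmt_16 (Q X Y : IPCFormula) (Z : ℕ → IPCFormula) (N : ℕ)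
    (i : ℕ) (hi : i ≤ N) (hZi : Z i = ((X ⊃' Y) ⊃' Q))
    (h : IPCThm ((((X ⊃' Q) ⊃' Q) ⊃' IPCC Q Z N)) ∨
         IPCThm (((Y ⊃' Q) ⊃' IPCC Q Z N))) :
    IPCThm (IPCC Q Z N) := by
  classical
  set Γ := IPCAux.hyps Z N with hΓ
  -- α is available as a hypothesis
  have hα : IPCDeriv Γ ((X ⊃' Y) ⊃' Q) := by
    have := IPCDeriv.hyp (Γ := Γ) (IPCAux.mem_hyps (Z := Z) hi)
    rwa [hZi] at this
  -- Γ ⊢ α₁ = Y ⊃ Q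
  have hα1 : IPCDeriv Γ (Y ⊃' Q) := by
    apply IPCAux.deduction
    exact IPCDeriv.mp (IPCAux.weaken hα (Set.subset_insert _ _))
      (IPCDeriv.mp (IPCDeriv.ipc1 Y X) (IPCDeriv.hyp (Set.mem_insert _ _)))
  -- Γ ⊢ α₀ = (X ⊃ Q) ⊃ Q
  have hα0 : IPCDeriv Γ ((X ⊃' Q) ⊃' Q) := by
    apply IPCAux.deduction
    -- hypotheses: X ⊃ Q, Γ.  Use Peirce: ((Q ⊃ Y) ⊃ Q) ⊃ Q
    apply IPCDeriv.mp (IPCDeriv.peirce Q Y)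
    apply IPCAux.deduction
    -- hypotheses: Q ⊃ Y, X ⊃ Q, Γ; derive X ⊃ Y, then Q via α
    have hXY : IPCDeriv (insert (Q ⊃' Y) (insert (X ⊃' Q) Γ)) (X ⊃' Y) := by
      apply IPCAux.deduction
      have hX : IPCDeriv (insert X (insert (Q ⊃' Y) (insert (X ⊃' Q) Γ))) X :=
        IPCDeriv.hyp (Set.mem_insert _ _)
      have hXQ : IPCDeriv (insert X (insert (Q ⊃' Y) (insert (X ⊃' Q) Γ))) (X ⊃' Q) :=
        IPCDeriv.hyp (Set.mem_insert_of_mem _ (Set.mem_insert_of_mem _ (Set.mem_insert _ _)))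
      have hQY : IPCDeriv (insert X (insert (Q ⊃' Y) (insert (X ⊃' Q) Γ))) (Q ⊃' Y) :=
        IPCDeriv.hyp (Set.mem_insert_of_mem _ (Set.mem_insert _ _))
      exact IPCDeriv.mp hQY (IPCDeriv.mp hXQ hX)
    exact IPCDeriv.mp
      (IPCAux.weaken hα (fun F hF => Set.mem_insert_of_mem _ (Set.mem_insert_of_mem _ hF)))
      hXY
  -- in either case Γ ⊢ C
  have hC : IPCDeriv Γ (IPCC Q Z N) := by
    rcases h with h | h
    · exact IPCDeriv.mp (IPCAux.weaken h (Set.empty_subset _)) hα0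
    · exact IPCDeriv.mp (IPCAux.weaken h (Set.empty_subset _)) hα1
  -- hence Γ ⊢ Q, hence ⊢ C
  exact IPCAux.deriv_to_thm Q Z N (IPCAux.thm_unfold Q Z N hC)
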